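/- Let A be an r×c tropical matrix with full rank and connected bipartite graph B_A. Then there exists a vector u ∈ ℝ^r that is a right eigenvector simultaneously for every matrix P ∈ G_A, and a vector v ∈ ℝ^c that is a left eigenvector simultaneously for every matrix Q in the dual group {}_AG. -/

import Mathlib

open scoped Classical

/-- The tropical (max-plus) semiring carrier: `ℝ ∪ {-∞}`, where `⊔` is tropical
addition (max) and `+` is tropical multiplication (with `⊥ = -∞` absorbing). -/
abbrev Trop : Type := WithBot ℝ

/-- Tropical matrix multiplication: `(A ⊗ B) i j = max_k (A i k + B k j)`. -/
def tmul {n m p : ℕ} (A : Fin n → Fin m → Trop) (B : Fin m → Fin p → Trop) :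
    Fin n → Fin p → Trop :=
  fun i j => Finset.univ.sup fun k => A i k + B k j

/-- Tropical matrix-vector multiplication (column vector on the right). -/
def tvmul {n m : ℕ} (A : Fin n → Fin m → Trop) (v : Fin m → Trop) : Fin n → Trop :=
  fun i => Finset.univ.sup fun k => A i k + v k

/-- Tropical vector-matrix multiplication (row vector on the left). -/
def vtmul {n m : ℕ} (v : Fin n → Trop) (A : Fin n → Fin m → Trop) : Fin m → Trop :=
  fun j => Finset.univ.sup fun k => v k + A k j

/-- The tropical identity matrix: `0` on the diagonal, `-∞` elsewhere. -/
def tId (n : ℕ) : Fin n → Fin n → Trop :=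
  fun i j => if i = j then ((0 : ℝ) : Trop) else ⊥

/-- A monomial matrix: exactly one entry different from `-∞` in each row and each column. -/
def IsMonomial {n : ℕ} (P : Fin n → Fin n → Trop) : Prop :=
  (∀ i, ∃! j, P i j ≠ ⊥) ∧ (∀ j, ∃! i, P i j ≠ ⊥)

/-- A `T`-subsemimodule of `T^n`: closed under tropical addition (max) and scaling. -/
def IsTropSubmodule {n : ℕ} (S : Set (Fin n → Trop)) : Prop :=
  (∀ x ∈ S, ∀ y ∈ S, x ⊔ y ∈ S) ∧
  (∀ c : Trop, ∀ x ∈ S, (fun i => c + x i) ∈ S)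

/-- The `T`-subsemimodule generated by a set of vectors. -/
def genBy {n : ℕ} (G : Set (Fin n → Trop)) : Set (Fin n → Trop) :=
  ⋂₀ {S | IsTropSubmodule S ∧ G ⊆ S}

/-- The column space of a tropical matrix. -/
def colSpace {n m : ℕ} (A : Fin n → Fin m → Trop) : Set (Fin n → Trop) :=
  genBy {v | ∃ j, v = fun i => A i j}

/-- The row space of a tropical matrix. -/
def rowSpace {n m : ℕ} (A : Fin n → Fin m → Trop) : Set (Fin m → Trop) :=
  genBy {v | ∃ i, v = fun j => A i j}

/-- The column rank: minimum cardinality of a generating set of the column space. -/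
noncomputable def colRank {n m : ℕ} (A : Fin n → Fin m → Trop) : ℕ :=
  sInf {k | ∃ G : Finset (Fin n → Trop), G.card = k ∧ genBy (↑G) = colSpace A}

/-- The row rank: minimum cardinality of a generating set of the row space. -/
noncomputable def rowRank {n m : ℕ} (A : Fin n → Fin m → Trop) : ℕ :=
  sInf {k | ∃ G : Finset (Fin m → Trop), G.card = k ∧ genBy (↑G) = rowSpace A}

/-- Isomorphism of tropical subsemimodules (given by a bijection preserving
tropical addition and scaling). -/
def TropIso {n m : ℕ} (S : Set (Fin n → Trop)) (S' : Set (Fin m → Trop)) : Prop :=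
  ∃ f : (Fin n → Trop) → (Fin m → Trop),
    Set.BijOn f S S' ∧
    (∀ x ∈ S, ∀ y ∈ S, f (x ⊔ y) = f x ⊔ f y) ∧
    (∀ c : Trop, ∀ x ∈ S, f (fun i => c + x i) = fun i => c + f x i)

/-- The `H`-class of a matrix `A` in `M(T)` (among matrices of the same shape),
characterised by equality of column and row spaces. -/
def HSet {n m : ℕ} (A : Fin n → Fin m → Trop) : Set (Fin n → Fin m → Trop) :=
  {B | colSpace B = colSpace A ∧ rowSpace B = rowSpace A}

/-- Adjacency of the coloured bipartite graph `B_A` of a tropical matrix. -/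
def BAdj {r c : ℕ} (A : Fin r → Fin c → Trop) :
    (Fin r ⊕ Fin c) → (Fin r ⊕ Fin c) → Prop
  | Sum.inl i, Sum.inr j => A i j ≠ ⊥
  | Sum.inr j, Sum.inl i => A i j ≠ ⊥
  | _, _ => False

/-- Connectedness of the bipartite graph `B_A`. -/
def BConnected {r c : ℕ} (A : Fin r → Fin c → Trop) : Prop :=
  ∀ x y : Fin r ⊕ Fin c, Relation.ReflTransGen (BAdj A) x y

/-- `lam` is a tropical eigenvalue of `P`. -/
def IsEig {n : ℕ} (P : Fin n → Fin n → Trop) (lam : Trop) : Prop :=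
  ∃ v : Fin n → Trop, v ≠ (fun _ => ⊥) ∧ tvmul P v = fun i => lam + v i

/-- The group `G_A` of monomial matrices `P` with `C(PA) = C(A)`. -/
def GA {r c : ℕ} (A : Fin r → Fin c → Trop) : Set (Fin r → Fin r → Trop) :=
  {P | IsMonomial P ∧ colSpace (tmul P A) = colSpace A}

/-- The dual group `{}_AG` of monomial matrices `Q` with `R(AQ) = R(A)`. -/
def AGr {r c : ℕ} (A : Fin r → Fin c → Trop) : Set (Fin c → Fin c → Trop) :=
  {Q | IsMonomial Q ∧ rowSpace (tmul A Q) = rowSpace A}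

/-!
A monomial `P ∈ G_A` permutes the rows of `A` by some `σ` and adds `p i` to row `i`. The
columns of `A` are a basis of `C(A)` (full column rank), so `C(PA) = C(A)` forces the columns
of `PA` to be those of `A`, permuted by some `τ` and shifted by constants. So `(σ, τ)` lies in
the finite group of pairs of permutations that act on `A` as a diagonal rescaling `φ`, and `φ`
is unique up to an additive constant because `B_A` is connected. Hence `g ↦ φ_g` is a cocycle
up to constants, and averaging it over the group gives `ū` with `ū - ū ∘ g = φ_g + const` for
every `g`. On rows this says `P ⊗ ū = λ ⊗ ū`. For `{}_AG`, apply the same argument to the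
transpose of `A`.
-/

open Function
open Equiv (Perm)
open Sum (inl inr)

lemma trop_add_sup {ι : Type*} (a : Trop) (s : Finset ι) (f : ι → Trop) :
    a + s.sup f = s.sup fun j => a + f j := by
  simpa [Function.comp_def] using
    Finset.apply_sup_eq_sup_comp_of_linearOrder (s := s) (f := f) (a + ·)
      (fun _ _ h => add_le_add le_rfl h) (by simp)

lemma trop_sup_add {ι : Type*} (s : Finset ι) (f : ι → Trop) (a : Trop) :
    s.sup f + a = s.sup fun j => f j + a := by
  simp only [add_comm _ a, trop_add_sup]

lemma Finset.sup_univ_eq_of_eq_bot {ι α : Type*} [Fintype ι] [SemilatticeSup α] [OrderBot α]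
    {f : ι → α} (k : ι) (h : ∀ j, j ≠ k → f j = ⊥) : Finset.univ.sup f = f k := by
  refine le_antisymm (Finset.sup_le fun j _ => ?_) (Finset.le_sup (Finset.mem_univ k))
  by_cases hj : j = k
  · rw [hj]
  · simp [h j hj]

lemma trop_coe_add_eq_coe_add_iff {a b : ℝ} {x y : Trop} :
    (a : Trop) + x = b + y ↔ x = ((b - a : ℝ) : Trop) + y := by
  conv_rhs => rw [← WithBot.add_left_inj (WithBot.coe_ne_bot (a := a))]
  rw [← add_assoc, ← WithBot.coe_add, add_sub_cancel]

lemma trop_eq_of_eq_add_sup {c x y : Trop} (hc : c < 0) (h : x = (c + x) ⊔ y) : x = y := by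
  induction x using WithBot.recBotCoe with
  | bot => exact le_antisymm bot_le (h ▸ le_sup_right)
  | coe x =>
    have hlt : c + x < x := by
      induction c using WithBot.recBotCoe with
      | bot => exact WithBot.bot_lt_coe x
      | coe c => exact_mod_cast (by linarith [WithBot.coe_lt_coe.mp hc] : c + x < x)
    rcases le_total (c + x) y with hy | hy
    · rwa [sup_eq_right.mpr hy] at h
    · exact absurd (h.trans (sup_eq_left.mpr hy)) hlt.ne'

section Span

variable {n : ℕ}

lemma subset_genBy (G : Set (Fin n → Trop)) : G ⊆ genBy G :=
  fun _ hx => Set.mem_sInter.mpr fun _ hS => hS.2 hx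

lemma genBy_subset {G S : Set (Fin n → Trop)} (hS : IsTropSubmodule S) (h : G ⊆ S) :
    genBy G ⊆ S :=
  fun _ hx => Set.mem_sInter.mp hx S ⟨hS, h⟩

lemma isTropSubmodule_genBy (G : Set (Fin n → Trop)) : IsTropSubmodule (genBy G) :=
  ⟨fun x hx y hy => Set.mem_sInter.mpr fun S hS =>
      hS.1.1 x (Set.mem_sInter.mp hx S hS) y (Set.mem_sInter.mp hy S hS),
    fun c x hx => Set.mem_sInter.mpr fun S hS => hS.1.2 c x (Set.mem_sInter.mp hx S hS)⟩

lemma IsTropSubmodule.bot_mem {S : Set (Fin n → Trop)} (hS : IsTropSubmodule S)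
    (hne : S.Nonempty) : ⊥ ∈ S := by
  obtain ⟨x, hx⟩ := hne
  convert hS.2 ⊥ x hx using 1
  funext i
  simp

lemma vtmul_eq_sup {m : ℕ} (d : Fin m → Trop) (W : Fin m → Fin n → Trop) :
    vtmul d W = Finset.univ.sup fun l => fun i => d l + W l i := by
  funext i
  rw [Finset.sup_apply]
  rfl

lemma IsTropSubmodule.vtmul_mem {S : Set (Fin n → Trop)} (hS : IsTropSubmodule S)
    (hne : S.Nonempty) {m : ℕ} (d : Fin m → Trop) {W : Fin m → Fin n → Trop}
    (hW : ∀ l, d l ≠ ⊥ → W l ∈ S) : vtmul d W ∈ S := by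
  rw [vtmul_eq_sup]
  refine Finset.sup_induction (hS.bot_mem hne) hS.1 fun l _ => ?_
  by_cases hl : d l = ⊥
  · convert hS.bot_mem hne using 1
    funext i
    simp [hl]
  · exact hS.2 _ _ (hW l hl)

@[simp]
lemma vtmul_bot {m : ℕ} (W : Fin m → Fin n → Trop) : vtmul ⊥ W = ⊥ := by
  funext i
  simp [vtmul]

lemma vtmul_single {m : ℕ} (W : Fin m → Fin n → Trop) (k : Fin m) (a : Trop) :
    vtmul (fun l => if l = k then a else ⊥) W = fun i => a + W k i :=
  funext fun i => (Finset.sup_univ_eq_of_eq_bot k fun l hl => by simp [hl]).trans (by simp)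

lemma exists_vtmul_of_mem_rowSpace {m : ℕ} {W : Fin m → Fin n → Trop} {x : Fin n → Trop}
    (hx : x ∈ rowSpace W) : ∃ d, x = vtmul d W := by
  refine genBy_subset (S := Set.range (vtmul · W)) ⟨?_, ?_⟩ ?_ hx |>.imp fun _ => Eq.symm
  · rintro _ ⟨d, rfl⟩ _ ⟨d', rfl⟩
    refine ⟨d ⊔ d', funext fun i => ?_⟩
    simp only [Pi.sup_apply, vtmul]
    rw [← Finset.sup_sup]
    exact Finset.sup_congr rfl fun k _ => (max_add_add_right _ _ _).symm
  · rintro a _ ⟨d, rfl⟩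
    refine ⟨fun l => a + d l, funext fun i => ?_⟩
    simp only [vtmul, trop_add_sup, add_assoc]
  · rintro _ ⟨k, rfl⟩
    exact ⟨_, (vtmul_single W k 0).trans (by simp)⟩

lemma vtmul_tmul {m p : ℕ} (d : Fin m → Trop) (E : Fin m → Fin p → Trop)
    (W : Fin p → Fin n → Trop) : vtmul d (tmul E W) = vtmul (vtmul d E) W := by
  funext i
  simp only [vtmul, tmul, trop_add_sup, trop_sup_add, add_assoc]
  exact Finset.sup_comm _ _ _

lemma vtmul_apply_eq_sup_vtmul_update (d : Fin m → Trop) (W : Fin m → Fin n → Trop)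
    (k : Fin m) (i : Fin n) : vtmul d W i = (d k + W k i) ⊔ vtmul (update d k ⊥) W i := by
  simp only [vtmul]
  rw [← Finset.insert_erase (Finset.mem_univ k), Finset.sup_insert, Finset.sup_insert,
    update_self, WithBot.bot_add, bot_sup_eq]
  congr 1
  exact Finset.sup_congr rfl fun l hl => by rw [update_of_ne (Finset.ne_of_mem_erase hl)]

lemma tmul_assoc {p q : ℕ} (D : Fin m → Fin p → Trop) (E : Fin p → Fin q → Trop)
    (W : Fin q → Fin n → Trop) : tmul D (tmul E W) = tmul (tmul D E) W :=
  funext fun k => vtmul_tmul (D k) E W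

end Span

section Basis

variable {m n : ℕ}

def RowIrredundant (W : Fin m → Fin n → Trop) : Prop :=
  ∀ k (d : Fin m → Trop), d k = ⊥ → W k ≠ vtmul d W

lemma rowIrredundant_of_rowRank {W : Fin m → Fin n → Trop} (hW : rowRank W = m)
    (hne : ∀ k, W k ≠ ⊥) : RowIrredundant W := by
  intro k d hdk hWk
  obtain ⟨l, hl⟩ : ∃ l, d l ≠ ⊥ := by
    by_contra! h
    exact hne k (hWk.trans (by rw [show d = ⊥ from funext h, vtmul_bot]))
  have hlk : l ≠ k := fun h => hl (h ▸ hdk)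
  set G := (Finset.univ.erase k).image W
  have hG : ∀ l', l' ≠ k → W l' ∈ genBy (G : Set (Fin n → Trop)) :=
    fun l' hl' => subset_genBy _ (Finset.mem_image.mpr ⟨l', by simpa using hl', rfl⟩)
  have hspan : genBy (G : Set (Fin n → Trop)) = rowSpace W := by
    refine (genBy_subset (isTropSubmodule_genBy _) ?_).antisymm
      (genBy_subset (isTropSubmodule_genBy _) ?_)
    · intro v hv
      obtain ⟨l', -, rfl⟩ := Finset.mem_image.mp hv
      exact subset_genBy _ ⟨l', rfl⟩
    · rintro _ ⟨l', rfl⟩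
      by_cases hl' : l' = k
      · subst hl'
        rw [hWk]
        exact (isTropSubmodule_genBy _).vtmul_mem ⟨_, hG l hlk⟩ d
          fun l'' hl'' => hG l'' fun h => hl'' (h ▸ hdk)
      · exact hG l' hl'
  have hle : m ≤ G.card := hW ▸ Nat.sInf_le ⟨G, rfl, hspan⟩
  have hcard : G.card ≤ m - 1 :=
    Finset.card_image_le.trans (by simp [Finset.card_erase_of_mem])
  have := k.pos
  omega

lemma RowIrredundant.diag_eq_zero {W : Fin m → Fin n → Trop} (hW : RowIrredundant W)
    {C : Fin m → Fin m → Trop} (hC : W = tmul C W) (k : Fin m) : C k k = 0 := by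
  have hsplit : ∀ i, W k i = (C k k + W k i) ⊔ vtmul (update (C k) k ⊥) W i := fun i =>
    (congrFun (congrFun hC k) i).trans (vtmul_apply_eq_sup_vtmul_update (C k) W k i)
  obtain ⟨i, hi⟩ : ∃ i, W k i ≠ ⊥ := by
    by_contra! h
    exact hW k ⊥ rfl ((funext h).trans (vtmul_bot W).symm)
  rcases lt_trichotomy (C k k) 0 with hlt | heq | hgt
  · exact absurd (funext fun i => trop_eq_of_eq_add_sup hlt (hsplit i))
      (hW k _ (update_self k ⊥ (C k)))
  · exact heq
  · obtain ⟨x, hx⟩ := WithBot.ne_bot_iff_exists.mp hi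
    obtain ⟨c, hc⟩ := WithBot.ne_bot_iff_exists.mp hgt.ne_bot
    have hle : C k k + W k i ≤ W k i := le_sup_left.trans_eq (hsplit i).symm
    rw [← hx, ← hc, ← WithBot.coe_add, WithBot.coe_le_coe] at hle
    rw [← hc] at hgt
    linarith [WithBot.coe_lt_coe.mp hgt]

lemma row_eq_add_of_tmul_eq {W Z : Fin m → Fin n → Trop} {D E : Fin m → Fin m → Trop}
    (hD : W = tmul D Z) (hE : Z = tmul E W) {j k : Fin m} (h : D k j + E j k = 0) (i : Fin n) :
    Z j i = E j k + W k i := by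
  have hZ : E j k + W k i ≤ Z j i := by
    rw [hE]
    exact Finset.le_sup (f := fun l => E j l + W l i) (Finset.mem_univ k)
  have hW : D k j + Z j i ≤ W k i := by
    rw [hD]
    exact Finset.le_sup (f := fun l => D k l + Z l i) (Finset.mem_univ j)
  have hW' : W k i = D k j + Z j i := by
    refine le_antisymm ?_ hW
    calc W k i = (D k j + E j k) + W k i := by rw [h, zero_add]
      _ ≤ D k j + Z j i := by rw [add_assoc]; exact add_le_add le_rfl hZ
  calc Z j i = (E j k + D k j) + Z j i := by rw [add_comm (E j k), h, zero_add]
    _ = E j k + W k i := by rw [add_assoc, ← hW']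

theorem RowIrredundant.exists_perm_of_rowSpace_eq {W Z : Fin m → Fin n → Trop}
    (hW : RowIrredundant W) (hZW : rowSpace Z = rowSpace W) :
    ∃ (τ : Perm (Fin m)) (q : Fin m → ℝ), ∀ k i, Z (τ k) i = (q k : Trop) + W k i := by
  choose D hD using fun k =>
    exists_vtmul_of_mem_rowSpace (hZW ▸ subset_genBy _ ⟨k, rfl⟩ : W k ∈ rowSpace Z)
  choose E hE using fun j =>
    exists_vtmul_of_mem_rowSpace (hZW ▸ subset_genBy _ ⟨j, rfl⟩ : Z j ∈ rowSpace W)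
  have hWD : W = tmul D Z := funext hD
  have hZE : Z = tmul E W := funext hE
  have hrow : ∀ k, ∃ j, ∃ q : ℝ, ∀ i, Z j i = (q : Trop) + W k i := by
    intro k
    have hdiag := hW.diag_eq_zero (by rw [← tmul_assoc, ← hZE, ← hWD]) k
    obtain ⟨j, -, hj⟩ :=
      Finset.exists_mem_eq_sup _ ⟨k, Finset.mem_univ k⟩ fun j => D k j + E j k
    have hsum : D k j + E j k = 0 := hj ▸ hdiag
    obtain ⟨-, q, -, hq, -⟩ := WithBot.add_eq_coe.mp hsum
    exact ⟨j, q, fun i => hq ▸ row_eq_add_of_tmul_eq hWD hZE hsum i⟩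
  choose jj q hq using hrow
  have hinj : Injective jj := by
    intro k k' hkk'
    by_contra hne
    refine hW k (fun l => if l = k' then ((q k' - q k : ℝ) : Trop) else ⊥) (if_neg hne)
      (funext fun i => ?_)
    rw [vtmul_single]
    exact trop_coe_add_eq_coe_add_iff.mp ((hq k i).symm.trans (hkk' ▸ hq k' i))
  exact ⟨Equiv.ofBijective jj (Finite.injective_iff_bijective.mp hinj), q, hq⟩

end Basis

section Monomial

variable {n : ℕ}

def monomialMatrix (σ : Perm (Fin n)) (p : Fin n → ℝ) : Fin n → Fin n → Trop :=
  fun i k => if k = σ i then (p i : Trop) else ⊥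

lemma IsMonomial.exists_eq_monomialMatrix {P : Fin n → Fin n → Trop} (hP : IsMonomial P) :
    ∃ σ p, P = monomialMatrix σ p := by
  choose σ hσ hσu using hP.1
  have hinj : Injective σ := fun i i' h => (hP.2 (σ i)).unique (hσ i) (h ▸ hσ i')
  choose p hp using fun i => WithBot.ne_bot_iff_exists.mp (hσ i)
  refine ⟨Equiv.ofBijective σ (Finite.injective_iff_bijective.mp hinj), p,
    funext fun i => funext fun k => ?_⟩
  simp only [monomialMatrix, Equiv.ofBijective_apply]
  split_ifs with hk
  · exact hk ▸ (hp i).symm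
  · by_contra h
    exact hk (hσu i k h)

lemma tvmul_monomialMatrix (σ : Perm (Fin n)) (p : Fin n → ℝ) (v : Fin n → Trop)
    (i : Fin n) : tvmul (monomialMatrix σ p) v i = p i + v (σ i) := by
  simp only [tvmul]
  rw [Finset.sup_univ_eq_of_eq_bot (σ i) fun k hk => by simp [monomialMatrix, hk]]
  simp [monomialMatrix]

lemma tmul_monomialMatrix {c : ℕ} (σ : Perm (Fin n)) (p : Fin n → ℝ)
    (A : Fin n → Fin c → Trop) (i : Fin n) (j : Fin c) :
    tmul (monomialMatrix σ p) A i j = p i + A (σ i) j :=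
  tvmul_monomialMatrix σ p (fun k => A k j) i

end Monomial

section Graph

variable {r c : ℕ} {A : Fin r → Fin c → Trop}

lemma BConnected.exists_forall_eq (hA : BConnected A) {f : Fin r ⊕ Fin c → ℝ}
    (hf : ∀ i j, A i j ≠ ⊥ → f (inl i) = f (inr j)) : ∃ k, ∀ x, f x = k := by
  have hstep : ∀ x y, BAdj A x y → f x = f y := by
    rintro (i | j) (i' | j') h
    exacts [h.elim, hf _ _ h, (hf _ _ h).symm, h.elim]
  rcases isEmpty_or_nonempty (Fin r ⊕ Fin c) with hV | hV
  · exact ⟨0, isEmptyElim⟩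
  obtain ⟨x₀⟩ := hV
  refine ⟨f x₀, fun x => ?_⟩
  induction hA x₀ x with
  | refl => rfl
  | tail _ hbc ih => exact (hstep _ _ hbc).symm.trans ih

lemma BConnected.exists_ne_bot [Nonempty (Fin r)] (hA : BConnected A) (j : Fin c) :
    ∃ i, A i j ≠ ⊥ := by
  obtain ⟨i₀⟩ := ‹Nonempty (Fin r)›
  rcases Relation.ReflTransGen.cases_head (hA (inr j) (inl i₀)) with h | ⟨i | j', hadj, -⟩
  · exact absurd h Sum.inr_ne_inl
  · exact ⟨i, hadj⟩
  · exact hadj.elim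

lemma BConnected.swap (hA : BConnected A) : BConnected (swap A) := by
  intro x y
  simpa [onFun] using Relation.ReflTransGen.lift (p := BAdj (Function.swap A)) Sum.swap
    (fun a b h => by rcases a with i | j <;> rcases b with i' | j' <;> exact h)
    _ _ (hA x.swap y.swap)

end Graph

section Rescaling

variable {r c : ℕ} (A : Fin r → Fin c → Trop)

/-- Permuting the rows of `A` by `g.1` and its columns by `g.2` amounts to adding
`-φ (inl i)` to row `i` and `φ (inr j)` to column `j`. -/
def IsRescaling (g : Perm (Fin r) × Perm (Fin c)) (φ : Fin r ⊕ Fin c → ℝ) : Prop :=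
  ∀ i j, (φ (inl i) : Trop) + A (g.1 i) (g.2 j) = φ (inr j) + A i j

variable {A}

lemma IsRescaling.one : IsRescaling A 1 0 := fun _ _ => rfl

lemma IsRescaling.mul {g h : Perm (Fin r) × Perm (Fin c)} {φ ψ : Fin r ⊕ Fin c → ℝ}
    (hg : IsRescaling A g φ) (hh : IsRescaling A h ψ) :
    IsRescaling A (h * g) (fun x => φ x + ψ (Sum.map g.1 g.2 x)) := by
  intro i j
  simp only [Sum.map_inl, Sum.map_inr, Prod.fst_mul, Prod.snd_mul, Equiv.Perm.mul_apply,
    WithBot.coe_add]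
  rw [add_assoc, hh, add_left_comm, hg, add_left_comm, add_assoc]

lemma IsRescaling.inv {g : Perm (Fin r) × Perm (Fin c)} {φ : Fin r ⊕ Fin c → ℝ}
    (hg : IsRescaling A g φ) :
    IsRescaling A g⁻¹ (fun x => -φ (Sum.map g⁻¹.1 g⁻¹.2 x)) := by
  intro i j
  have h := trop_coe_add_eq_coe_add_iff.mp (hg (g⁻¹.1 i) (g⁻¹.2 j))
  simp only [Prod.fst_inv, Prod.snd_inv, Equiv.Perm.coe_inv, Equiv.apply_symm_apply, Sum.map_inl,
    Sum.map_inr] at h ⊢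
  rw [trop_coe_add_eq_coe_add_iff, h, ← add_assoc, ← WithBot.coe_add]
  ring_nf
  simp

lemma IsRescaling.add_const {g : Perm (Fin r) × Perm (Fin c)} {φ : Fin r ⊕ Fin c → ℝ}
    (hg : IsRescaling A g φ) (k : ℝ) : IsRescaling A g (fun x => φ x + k) := by
  intro i j
  simp only [WithBot.coe_add]
  rw [add_right_comm, hg, add_right_comm]

lemma IsRescaling.exists_eq_add_const (hA : BConnected A) {g : Perm (Fin r) × Perm (Fin c)}
    {φ ψ : Fin r ⊕ Fin c → ℝ} (hφ : IsRescaling A g φ) (hψ : IsRescaling A g ψ) :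
    ∃ k, ∀ x, φ x = ψ x + k := by
  obtain ⟨k, hk⟩ := hA.exists_forall_eq (f := fun x => φ x - ψ x) fun i j hij => by
    obtain ⟨a, ha⟩ := WithBot.ne_bot_iff_exists.mp hij
    have h := (trop_coe_add_eq_coe_add_iff.mp (hφ i j)).symm.trans
      (trop_coe_add_eq_coe_add_iff.mp (hψ i j))
    rw [← ha, ← WithBot.coe_add, ← WithBot.coe_add, WithBot.coe_inj] at h
    linarith
  exact ⟨k, fun x => by linarith [hk x]⟩

variable (A)

def rescalingGroup : Subgroup (Perm (Fin r) × Perm (Fin c)) where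
  carrier := {g | ∃ φ, IsRescaling A g φ}
  one_mem' := ⟨0, IsRescaling.one⟩
  mul_mem' := fun ⟨_, hφ⟩ ⟨_, hψ⟩ => ⟨_, hψ.mul hφ⟩
  inv_mem' := fun ⟨_, hφ⟩ => ⟨_, hφ.inv⟩

noncomputable def rescaling (g : rescalingGroup A) : Fin r ⊕ Fin c → ℝ := g.2.choose

lemma isRescaling_rescaling (g : rescalingGroup A) : IsRescaling A g (rescaling A g) :=
  g.2.choose_spec

noncomputable def averagedRescaling (x : Fin r ⊕ Fin c) : ℝ :=
  (Fintype.card (rescalingGroup A) : ℝ)⁻¹ * ∑ h : rescalingGroup A, rescaling A h x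

theorem isRescaling_averagedRescaling_sub (hA : BConnected A) {g : Perm (Fin r) × Perm (Fin c)}
    (hg : g ∈ rescalingGroup A) :
    IsRescaling A g fun x => averagedRescaling A x - averagedRescaling A (Sum.map g.1 g.2 x) := by
  let g' : rescalingGroup A := ⟨g, hg⟩
  choose k hk using fun h : rescalingGroup A =>
    (isRescaling_rescaling A (h * g')).exists_eq_add_const hA
      ((isRescaling_rescaling A g').mul (isRescaling_rescaling A h))
  have hsum : ∀ x, ∑ h, rescaling A h x = Fintype.card (rescalingGroup A) * rescaling A g' x
      + ∑ h, rescaling A h (Sum.map g.1 g.2 x) + ∑ h, k h := by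
    intro x
    rw [← Equiv.sum_comp (Equiv.mulRight g')]
    simp only [Equiv.coe_mulRight, hk, Finset.sum_add_distrib, Finset.sum_const,
      Finset.card_univ, nsmul_eq_mul]
    ring
  have hN : (Fintype.card (rescalingGroup A) : ℝ) ≠ 0 :=
    Nat.cast_ne_zero.mpr Fintype.card_ne_zero
  convert (isRescaling_rescaling A g').add_const
    ((∑ h, k h) / Fintype.card (rescalingGroup A)) using 1
  funext x
  simp only [averagedRescaling]
  rw [hsum x]
  field_simp
  ring

end Rescaling

section Eigenvector

variable {r c : ℕ} {A : Fin r → Fin c → Trop}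

lemma exists_isRescaling_of_monomialMatrix_mem_GA [Nonempty (Fin r)] (hc : colRank A = c)
    (hA : BConnected A) {σ : Perm (Fin r)} {p : Fin r → ℝ}
    (hP : monomialMatrix σ p ∈ GA A) :
    ∃ τ q, IsRescaling A (σ, τ) (Sum.elim p q) := by
  have hirr : RowIrredundant (swap A) := rowIrredundant_of_rowRank hc fun j h =>
    (hA.exists_ne_bot j).elim fun i hi => hi (congrFun h i)
  obtain ⟨τ, q, hq⟩ := hirr.exists_perm_of_rowSpace_eq
    (Z := swap (tmul (monomialMatrix σ p) A)) hP.2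
  refine ⟨τ, q, fun i j => ?_⟩
  exact (tmul_monomialMatrix σ p A i (τ j)).symm.trans (hq j i)

theorem exists_common_eigenvector_GA (hc : colRank A = c) (hA : BConnected A) :
    ∃ u : Fin r → ℝ, ∀ P ∈ GA A, ∃ lam : ℝ,
      tvmul P (fun i => ((u i : ℝ) : Trop)) = fun i => (((lam + u i : ℝ)) : Trop) := by
  rcases isEmpty_or_nonempty (Fin r) with hr | hr
  · exact ⟨isEmptyElim, fun _ _ => ⟨0, funext isEmptyElim⟩⟩
  refine ⟨fun i => averagedRescaling A (inl i), fun P hP => ?_⟩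
  obtain ⟨σ, p, rfl⟩ := hP.1.exists_eq_monomialMatrix
  obtain ⟨τ, q, hφ⟩ := exists_isRescaling_of_monomialMatrix_mem_GA hc hA hP
  obtain ⟨k, hk⟩ :=
    (isRescaling_averagedRescaling_sub A hA ⟨_, hφ⟩).exists_eq_add_const hA hφ
  refine ⟨-k, funext fun i => ?_⟩
  have hki := hk (inl i)
  simp only [Sum.map_inl, Sum.elim_inl] at hki
  rw [tvmul_monomialMatrix, ← WithBot.coe_add, WithBot.coe_inj]
  linarith

end Eigenvector

section Transpose

variable {r c : ℕ}

lemma IsMonomial.swap {P : Fin c → Fin c → Trop} (hP : IsMonomial P) : IsMonomial (swap P) :=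
  ⟨hP.2, hP.1⟩

lemma swap_tmul (A : Fin r → Fin c → Trop) (Q : Fin c → Fin c → Trop) :
    swap (tmul A Q) = tmul (swap Q) (swap A) :=
  funext fun _ => funext fun _ => Finset.sup_congr rfl fun _ _ => add_comm _ _

lemma vtmul_eq_tvmul_swap (v : Fin c → Trop) (Q : Fin c → Fin c → Trop) :
    vtmul v Q = tvmul (swap Q) v :=
  funext fun _ => Finset.sup_congr rfl fun _ _ => add_comm _ _

lemma swap_mem_GA_of_mem_AGr {A : Fin r → Fin c → Trop} {Q : Fin c → Fin c → Trop}
    (hQ : Q ∈ AGr A) : swap Q ∈ GA (swap A) :=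
  ⟨hQ.1.swap, by rw [← swap_tmul]; exact hQ.2⟩

end Transpose

/-- For `A` of full rank with connected `B_A`, there is a finite vector
`u ∈ ℝ^r` which is a right eigenvector of every `P ∈ G_A`, and a finite vector `v ∈ ℝ^c`
which is a left eigenvector of every `Q ∈ {}_AG`. -/
theorem stmt_11 {r c : ℕ} (A : Fin r → Fin c → Trop)
    (hr : rowRank A = r) (hc : colRank A = c) (hconn : BConnected A) :
    (∃ u : Fin r → ℝ, ∀ P ∈ GA A, ∃ lam : ℝ,
      tvmul P (fun i => ((u i : ℝ) : Trop)) = fun i => (((lam + u i : ℝ)) : Trop)) ∧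
    (∃ v : Fin c → ℝ, ∀ Q ∈ AGr A, ∃ mu : ℝ,
      vtmul (fun j => ((v j : ℝ) : Trop)) Q = fun j => (((mu + v j : ℝ)) : Trop)) := by
  refine ⟨exists_common_eigenvector_GA hc hconn, ?_⟩
  obtain ⟨v, hv⟩ := exists_common_eigenvector_GA (A := swap A) hr hconn.swap
  exact ⟨v, fun Q hQ => by
    simpa only [vtmul_eq_tvmul_swap] using hv _ (swap_mem_GA_of_mem_AGr hQ)⟩
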